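/- arXiv:2203.09038 — 3 statements merged into one kernel-verified Lean document; each statement's English description precedes it below -/
import Mathlib

section
/- With the same setup, if μ̄ satisfies l*_B ≤ inf_{0≤λ≤B} L(μ̄,λ) + ε, R* ≤ l*_B, and R(μ) ≤ R_m for all μ, then C(μ̄) ≥ 1 − δ − (R_m − R* + ε)/B. -/
/-! Evaluating the Lagrangian of `μbar` at the largest admissible multiplier `λ = B` gives
`R* ≤ l*_B ≤ L(μbar, B) + ε ≤ R_m + B (C(μbar) - 1 + δ) + ε`, which rearranges to the claim. -/

theorem ciInf_Icc_le_of_continuousOn {f : ℝ → ℝ} {a b x : ℝ} (hf : ContinuousOn f (Set.Icc a b))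
    (hx : x ∈ Set.Icc a b) : ⨅ t : Set.Icc a b, f t ≤ f x := by
  have hbdd : BddBelow (Set.range fun t : Set.Icc a b => f t) := by
    rw [← Set.image_eq_range]
    exact (isCompact_Icc.image_of_continuousOn hf).bddBelow
  exact ciInf_le hbdd ⟨x, hx⟩

theorem stmt_1_general {M : Type*} (R C : M → ℝ) (δ B ε Rm : ℝ)
    (hB : 0 < B)
    (L : M → ℝ → ℝ) (hL : ∀ μ lam, L μ lam = R μ + lam * (C μ - 1 + δ))
    (Rstar lB : ℝ)
    (hRm : ∀ μ, R μ ≤ Rm)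
    (μbar : M)
    (h1 : lB ≤ (⨅ lam : Set.Icc (0 : ℝ) B, L μbar lam) + ε)
    (h2 : Rstar ≤ lB) :
    C μbar ≥ 1 - δ - (Rm - Rstar + ε) / B := by
  have hinf : ⨅ lam : Set.Icc (0 : ℝ) B, L μbar lam ≤ L μbar B :=
    ciInf_Icc_le_of_continuousOn (by rw [funext (hL μbar)]; fun_prop) ⟨hB.le, le_rfl⟩
  have key : Rstar ≤ Rm + B * (C μbar - 1 + δ) + ε := by linarith [hL μbar B, hRm μbar]
  rw [ge_iff_le, sub_le_comm, le_div_iff₀ hB]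
  linarith

/-- ε-optimality implies approximate constraint satisfaction. -/
theorem stmt_1 {M : Type*} [Nonempty M] (R C : M → ℝ) (δ B ε Rm : ℝ)
    (hδ : δ ∈ Set.Ioo (0 : ℝ) 1) (hB : 0 < B) (hε : 0 < ε)
    (L : M → ℝ → ℝ) (hL : ∀ μ lam, L μ lam = R μ + lam * (C μ - 1 + δ))
    (Rstar lB : ℝ)
    (hRstar : Rstar = sSup (R '' {μ | C μ ≥ 1 - δ}))
    (hlB : lB = ⨆ μ, ⨅ lam : Set.Icc (0 : ℝ) B, L μ lam)
    (hRm : ∀ μ, R μ ≤ Rm)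
    (μbar : M)
    (h1 : lB ≤ (⨅ lam : Set.Icc (0 : ℝ) B, L μbar lam) + ε)
    (h2 : Rstar ≤ lB) :
    C μbar ≥ 1 - δ - (Rm - Rstar + ε) / B :=
  stmt_1_general R C δ B ε Rm hB L hL Rstar lB hRm μbar h1 h2
end

section
/- Let L : M × [0,B] → ℝ be a function that is affine in its second argument, i.e., L(μ,λ) = R(μ) + λ·g(μ) for functions R, g : M → ℝ. Given μ_1,…,μ_K ∈ M, λ_1,…,λ_K ∈ [0,B], and a mixed policy μ̄ that averages the μ_k (so that R(μ̄) = (1/K)∑_k R(μ_k) and g(μ̄) = (1/K)∑_k g(μ_k)), suppose (i) L(μ_k, λ_k) ≥ L(μ, λ_k) for all μ and all k, and (ii) (1/K)∑_k L(μ_k, λ_k) ≤ inf_{λ∈[0,B]} (1/K)∑_k L(μ_k, λ) + ρ for some ρ ≥ 0. Then inf_{λ∈[0,B]} sup_μ L(μ,λ) ≤ inf_{λ∈[0,B]} L(μ̄,λ) + ρ. -/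
/-!
Evaluating the outer infimum at `λ_k` gives `inf_λ sup_μ L ≤ sup_μ L(μ, λ_k)`, and the
best-response condition makes this supremum equal to `L(μ_k, λ_k)`; averaging over `k` bounds the
inf-sup value by the average payoff of the play. The regret bound then compares that average with `inf_λ (1/K) ∑_k L(μ_k, λ)`, which is
`inf_λ L(μ̄, λ)` because `L` is affine in `λ` with coefficients averaged by `μ̄`.
-/

open Set Finset

-- `⨆` over an unbounded-above family of reals is `0`, hence the `min 0`.
lemma Real.min_zero_le_iSup {ι : Sort*} (f : ι → ℝ) (i : ι) : min 0 (f i) ≤ ⨆ j, f j := by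
  by_cases hf : BddAbove (range f)
  · exact (min_le_right _ _).trans (le_ciSup hf i)
  · exact (min_le_left _ _).trans (Real.iSup_of_not_bddAbove hf).ge

lemma Real.bddBelow_range_iSup {α : Type*} {ι : Sort*} {F : α → ι → ℝ} (i : ι)
    (h : BddBelow (range fun a ↦ F a i)) : BddBelow (range fun a ↦ ⨆ j, F a j) := by
  obtain ⟨c, hc⟩ := h
  refine ⟨min 0 c, ?_⟩
  rintro _ ⟨a, rfl⟩
  exact (min_le_min_left 0 (hc ⟨a, rfl⟩)).trans (Real.min_zero_le_iSup _ i)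

lemma le_one_div_mul_sum_of_forall_le {K : ℕ} (hK : 1 ≤ K) {f : Fin K → ℝ} {c : ℝ}
    (h : ∀ k, c ≤ f k) : c ≤ 1 / K * ∑ k, f k := by
  rw [one_div_mul_eq_div, le_div_iff₀ (by exact_mod_cast hK)]
  simpa [mul_comm] using Finset.card_nsmul_le_sum univ f c fun k _ ↦ h k

lemma one_div_mul_sum_affine {M : Type*} (R g : M → ℝ) {K : ℕ} (μs : Fin K → M) {μbar : M}
    (hRavg : R μbar = 1 / K * ∑ k, R (μs k)) (hgavg : g μbar = 1 / K * ∑ k, g (μs k)) (lam : ℝ) :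
    1 / K * ∑ k, (R (μs k) + lam * g (μs k)) = R μbar + lam * g μbar := by
  rw [hRavg, hgavg, Finset.sum_add_distrib, ← Finset.mul_sum]
  ring

theorem stmt_8_general {M : Type*} (B : ℝ)
    (R g : M → ℝ)
    (L : M → ℝ → ℝ) (hL : ∀ μ lam, L μ lam = R μ + lam * g μ)
    (K : ℕ) (hK : 1 ≤ K)
    (μs : Fin K → M) (lams : Fin K → ℝ) (hlams : ∀ k, lams k ∈ Set.Icc (0 : ℝ) B)
    (μbar : M)
    (hRavg : R μbar = (1 / (K : ℝ)) * ∑ k, R (μs k))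
    (hgavg : g μbar = (1 / (K : ℝ)) * ∑ k, g (μs k))
    (ρ : ℝ)
    (hbr : ∀ (μ : M) (k : Fin K), L μ (lams k) ≤ L (μs k) (lams k))
    (hreg : (1 / (K : ℝ)) * ∑ k, L (μs k) (lams k) ≤
      (⨅ lam : Set.Icc (0 : ℝ) B, (1 / (K : ℝ)) * ∑ k, L (μs k) (lam : ℝ)) + ρ) :
    (⨅ lam : Set.Icc (0 : ℝ) B, ⨆ μ, L μ (lam : ℝ)) ≤
      (⨅ lam : Set.Icc (0 : ℝ) B, L μbar (lam : ℝ)) + ρ := by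
  have : Nonempty M := ⟨μbar⟩
  have hL_avg (lam : ℝ) : 1 / K * ∑ k, L (μs k) lam = L μbar lam := by
    simp only [hL]
    exact one_div_mul_sum_affine R g μs hRavg hgavg lam
  have hbdd : BddBelow (range fun lam : Icc (0 : ℝ) B ↦ ⨆ μ, L μ lam) := by
    refine Real.bddBelow_range_iSup μbar ?_
    rw [← image_eq_range]
    exact isCompact_Icc.bddBelow_image (by rw [show L μbar = _ from funext (hL μbar)]; fun_prop)
  calc (⨅ lam : Icc (0 : ℝ) B, ⨆ μ, L μ lam)
      ≤ 1 / K * ∑ k, L (μs k) (lams k) := le_one_div_mul_sum_of_forall_le hK fun k ↦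
        (ciInf_le hbdd ⟨lams k, hlams k⟩).trans (ciSup_le fun μ ↦ hbr μ k)
    _ ≤ _ := hreg
    _ = _ := by simp only [hL_avg]

/-- no-regret play with best responses bounds the inf-sup value by the value
of the averaged policy. -/
theorem stmt_8 {M : Type*} [Nonempty M] (B : ℝ) (hB : 0 < B)
    (R g : M → ℝ) (hRb : ∃ K, ∀ μ, |R μ| ≤ K) (hgb : ∃ K, ∀ μ, |g μ| ≤ K)
    (L : M → ℝ → ℝ) (hL : ∀ μ lam, L μ lam = R μ + lam * g μ)
    (K : ℕ) (hK : 1 ≤ K)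
    (μs : Fin K → M) (lams : Fin K → ℝ) (hlams : ∀ k, lams k ∈ Set.Icc (0 : ℝ) B)
    (μbar : M)
    (hRavg : R μbar = (1 / (K : ℝ)) * ∑ k, R (μs k))
    (hgavg : g μbar = (1 / (K : ℝ)) * ∑ k, g (μs k))
    (ρ : ℝ) (hρ : 0 ≤ ρ)
    (hbr : ∀ (μ : M) (k : Fin K), L μ (lams k) ≤ L (μs k) (lams k))
    (hreg : (1 / (K : ℝ)) * ∑ k, L (μs k) (lams k) ≤
      (⨅ lam : Set.Icc (0 : ℝ) B, (1 / (K : ℝ)) * ∑ k, L (μs k) (lam : ℝ)) + ρ) :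
    (⨅ lam : Set.Icc (0 : ℝ) B, ⨆ μ, L μ (lam : ℝ)) ≤
      (⨅ lam : Set.Icc (0 : ℝ) B, L μbar (lam : ℝ)) + ρ :=
  stmt_8_general B R g L hL K hK μs lams hlams μbar hRavg hgavg ρ hbr hreg
end

section
/- Saddle-point bound chain: let L(μ,λ) = R(μ) + λ g(μ) with R, g : M → ℝ bounded and M nonempty, B > 0. Suppose λ̄ ∈ [0,B] and μ̄ ∈ M satisfy: (a) λ̄ = (1/K)∑_k λ_k with λ_k ∈ [0,B]; (b) R(μ̄) = (1/K)∑_k R(μ_k) and g(μ̄) = (1/K)∑_k g(μ_k); (c) L(μ_k,λ_k) = sup_μ L(μ,λ_k) for each k; (d) (1/K)∑_k L(μ_k,λ_k) ≤ inf_{λ∈[0,B]} (1/K)∑_k L(μ_k,λ) + ρ. Then sup_μ inf_{λ∈[0,B]} L(μ,λ) ≤ inf_{λ∈[0,B]} L(μ̄,λ) + ρ. -/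
/-- saddle-point bound chain in the proof of Theorem 2. -/
theorem stmt_18 {M : Type*} [Nonempty M] (B : ℝ) (hB : 0 < B)
    (R g : M → ℝ) (hRb : ∃ Kb, ∀ μ, |R μ| ≤ Kb) (hgb : ∃ Kb, ∀ μ, |g μ| ≤ Kb)
    (L : M → ℝ → ℝ) (hL : ∀ μ lam, L μ lam = R μ + lam * g μ)
    (K : ℕ) (hK : 1 ≤ K)
    (μs : Fin K → M) (lams : Fin K → ℝ) (hlams : ∀ k, lams k ∈ Set.Icc (0 : ℝ) B)
    (lambar : ℝ) (hlambar : lambar = (1 / (K : ℝ)) * ∑ k, lams k)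
    (μbar : M)
    (hRavg : R μbar = (1 / (K : ℝ)) * ∑ k, R (μs k))
    (hgavg : g μbar = (1 / (K : ℝ)) * ∑ k, g (μs k))
    (hbr : ∀ k : Fin K, L (μs k) (lams k) = ⨆ μ, L μ (lams k))
    (ρ : ℝ) (hρ : 0 ≤ ρ)
    (hreg : (1 / (K : ℝ)) * ∑ k, L (μs k) (lams k) ≤
      (⨅ lam : Set.Icc (0 : ℝ) B, (1 / (K : ℝ)) * ∑ k, L (μs k) (lam : ℝ)) + ρ) :
    (⨆ μ, ⨅ lam : Set.Icc (0 : ℝ) B, L μ (lam : ℝ)) ≤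
      (⨅ lam : Set.Icc (0 : ℝ) B, L μbar (lam : ℝ)) + ρ := by
  obtain ⟨KR, hKR⟩ := hRb
  obtain ⟨Kg, hKg⟩ := hgb
  have hKpos : (0 : ℝ) < (K : ℝ) := by exact_mod_cast Nat.lt_of_lt_of_le Nat.zero_lt_one hK
  have hKne : (K : ℝ) ≠ 0 := ne_of_gt hKpos
  set C : ℝ := KR + B * Kg with hC
  have habs : ∀ (μ : M) (lam : ℝ), lam ∈ Set.Icc (0 : ℝ) B → |L μ lam| ≤ C := by
    intro μ lam hlam
    rw [hL]
    have h1 : |R μ + lam * g μ| ≤ |R μ| + |lam| * |g μ| := by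
      simpa [abs_mul] using abs_add_le (R μ) (lam * g μ)
    refine h1.trans ?_
    have hlamB : |lam| ≤ B := by
      rw [abs_le]; exact ⟨le_trans (by linarith [hB]) hlam.1, hlam.2⟩
    have := hKg μ
    have := hKR μ
    have h2 : |lam| * |g μ| ≤ B * Kg := by
      apply mul_le_mul hlamB (hKg μ) (abs_nonneg _) (le_trans (abs_nonneg _) hlamB)
    linarith
  have hmem : lambar ∈ Set.Icc (0 : ℝ) B := by
    constructor
    · rw [hlambar]
      exact mul_nonneg (by positivity) (Finset.sum_nonneg fun k _ => (hlams k).1)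
    · rw [hlambar]
      have hsum : ∑ k, lams k ≤ ∑ _k : Fin K, B :=
        Finset.sum_le_sum fun k _ => (hlams k).2
      have h2 : (∑ _k : Fin K, B) = (K : ℝ) * B := by
        simp [Finset.sum_const, mul_comm]
      calc (1 / (K : ℝ)) * ∑ k, lams k ≤ (1 / (K : ℝ)) * ((K : ℝ) * B) := by
            rw [← h2]; exact mul_le_mul_of_nonneg_left hsum (by positivity)
        _ = B := by field_simp
  have key : ∀ μ : M, (⨅ lam : Set.Icc (0 : ℝ) B, L μ (lam : ℝ)) ≤
      (⨅ lam : Set.Icc (0 : ℝ) B, L μbar (lam : ℝ)) + ρ := by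
    intro μ
    have hbb : BddBelow (Set.range fun lam : Set.Icc (0 : ℝ) B => L μ (lam : ℝ)) := by
      refine ⟨-C, ?_⟩
      rintro x ⟨lam, rfl⟩
      exact le_trans (neg_le_neg (habs μ lam lam.2)) (neg_abs_le _)
    have step1 : (⨅ lam : Set.Icc (0 : ℝ) B, L μ (lam : ℝ)) ≤ L μ lambar :=
      ciInf_le hbb ⟨lambar, hmem⟩
    have step2 : L μ lambar = (1 / (K : ℝ)) * ∑ k, L μ (lams k) := by
      simp_rw [hL, Finset.sum_add_distrib, ← Finset.sum_mul]
      rw [hlambar, Finset.sum_const]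
      simp only [Finset.card_univ, Fintype.card_fin, nsmul_eq_mul]
      field_simp
    have step3 : (1 / (K : ℝ)) * ∑ k, L μ (lams k) ≤
        (1 / (K : ℝ)) * ∑ k, L (μs k) (lams k) := by
      apply mul_le_mul_of_nonneg_left _ (by positivity)
      apply Finset.sum_le_sum
      intro k _
      rw [hbr k]
      have hba : BddAbove (Set.range fun μ' : M => L μ' (lams k)) := by
        refine ⟨C, ?_⟩
        rintro x ⟨μ', rfl⟩
        exact le_trans (le_abs_self _) (habs μ' (lams k) (hlams k))
      exact le_ciSup hba μ
    have h5 : ∀ lam : ℝ, (1 / (K : ℝ)) * ∑ k, L (μs k) lam = L μbar lam := by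
      intro lam
      simp_rw [hL, Finset.sum_add_distrib, ← Finset.mul_sum]
      rw [hRavg, hgavg]
      ring
    have hinf : (⨅ lam : Set.Icc (0 : ℝ) B, (1 / (K : ℝ)) * ∑ k, L (μs k) (lam : ℝ)) =
        ⨅ lam : Set.Icc (0 : ℝ) B, L μbar (lam : ℝ) :=
      iInf_congr fun lam => h5 lam
    calc (⨅ lam : Set.Icc (0 : ℝ) B, L μ (lam : ℝ)) ≤ L μ lambar := step1
      _ = (1 / (K : ℝ)) * ∑ k, L μ (lams k) := step2
      _ ≤ (1 / (K : ℝ)) * ∑ k, L (μs k) (lams k) := step3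
      _ ≤ (⨅ lam : Set.Icc (0 : ℝ) B, (1 / (K : ℝ)) * ∑ k, L (μs k) (lam : ℝ)) + ρ := hreg
      _ = (⨅ lam : Set.Icc (0 : ℝ) B, L μbar (lam : ℝ)) + ρ := by rw [hinf]
  exact ciSup_le key
end
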